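/- arXiv:0912.2499 — 2 statements merged into one kernel-verified Lean document; each statement's English description precedes it below -/
import Mathlib

section
/- Let N ≥ 1, let ε > 0 be real and let Y be an arbitrary N×N complex matrix. Let (Y*Y + ε²I)^{1/2} and (YY* + ε²I)^{1/2} denote the positive definite square roots, where Y* is the conjugate transpose. Then the 2N×2N block matrix F̃ = [[ (Y*Y + ε²I)^{-1/2}, 0 ], [ 0, (YY* + ε²I)^{-1/2} ]] · [[ Y*, −εI ], [ εI, Y ]] is unitary and has determinant 1, i.e. F̃ ∈ SU(2N). -/
open MeasureTheory ProbabilityTheory Matrix Filter Topology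
open scoped ComplexConjugate ComplexOrder

noncomputable section

/-- The spectral (operator) norm of a square complex matrix. -/
def specNorm {n : Type*} [Fintype n] [DecidableEq n] (M : Matrix n n ℂ) : ℝ :=
  ‖Matrix.toEuclideanCLM (𝕜 := ℂ) (n := n) M‖

/-- The smallest singular value of a square complex matrix. -/
def leastSingular {n : Type*} [Fintype n] [DecidableEq n] (M : Matrix n n ℂ) : ℝ :=
  ⨅ v : {v : EuclideanSpace ℂ n // ‖v‖ = 1},
    ‖Matrix.toEuclideanCLM (𝕜 := ℂ) (n := n) M v.1‖

/-- The 2×2 matrix representation of the quaternion `a + b·j`, encoded as the pair `(a, b)`. -/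
def qmat (p : ℂ × ℂ) : Matrix (Fin 2) (Fin 2) ℂ :=
  !![p.1, Complex.I * p.2; Complex.I * conj p.2, conj p.1]

/-- The quaternion norm `|a + b·j| = sqrt(|a|² + |b|²)`. -/
def qnorm (p : ℂ × ℂ) : ℝ := Real.sqrt (‖p.1‖ ^ 2 + ‖p.2‖ ^ 2)

/-- Quaternion multiplication: `(a + bj)(c + dj) = (ac − b·conj d) + (ad + b·conj c)·j`. -/
def qmul (p q : ℂ × ℂ) : ℂ × ℂ :=
  (p.1 * q.1 - p.2 * conj q.2, p.1 * q.2 + p.2 * conj q.1)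

/-- Quaternion inverse. -/
def qinv (p : ℂ × ℂ) : ℂ × ℂ :=
  (conj p.1 / ((‖p.1‖ ^ 2 + ‖p.2‖ ^ 2 : ℝ) : ℂ),
   -p.2 / ((‖p.1‖ ^ 2 + ‖p.2‖ ^ 2 : ℝ) : ℂ))

/-- The elementwise product of quaternions: `(a + bj)·(c + dj) = ac + bd·j`. -/
def qdot (p q : ℂ × ℂ) : ℂ × ℂ := (p.1 * q.1, p.2 * q.2)

/-- The `2N×2N` doubling of an `N×N` matrix `X`, whose `(i,j)`-th `2×2` block is
`[[X i j, 0], [0, conj (X j i)]]`. -/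
def dbl {N : ℕ} (X : Matrix (Fin N) (Fin N) ℂ) :
    Matrix (Fin N × Fin 2) (Fin N × Fin 2) ℂ :=
  Matrix.of fun r s =>
    if r.2 = 0 ∧ s.2 = 0 then X r.1 s.1
    else if r.2 = 1 ∧ s.2 = 1 then conj (X s.1 r.1) else 0

/-- The matrix `𝐪 ⊗ I_N` of a quaternion `q` acting on `2N×2N` matrices. -/
def qId {N : ℕ} (p : ℂ × ℂ) : Matrix (Fin N × Fin 2) (Fin N × Fin 2) ℂ :=
  Matrix.of fun r s => if r.1 = s.1 then qmat p r.2 s.2 else 0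

/-- The `2N×2N` matrix `𝐙𝐣 = (dbl Z) · (𝐣 ⊗ I_N)`, whose `(i,j)`-th `2×2` block is
`[[0, i·Z i j], [i·conj (Z j i), 0]]`. -/
def dblJ {N : ℕ} (Z : Matrix (Fin N) (Fin N) ℂ) :
    Matrix (Fin N × Fin 2) (Fin N × Fin 2) ℂ :=
  Matrix.of fun r s =>
    if r.2 = 0 ∧ s.2 = 1 then Complex.I * Z r.1 s.1
    else if r.2 = 1 ∧ s.2 = 0 then Complex.I * conj (Z s.1 r.1) else 0

/-- The `(i,j)`-th `2×2` block of a `2N×2N` matrix. -/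
def blk {N : ℕ} (M : Matrix (Fin N × Fin 2) (Fin N × Fin 2) ℂ) (i j : Fin N) :
    Matrix (Fin 2) (Fin 2) ℂ :=
  Matrix.of fun s t => M (i, s) (j, t)

/-- The quaternionic Green's function `𝒢(p; X) = α + βj`: with
`𝐌 = (1/N)·Σ_i ((dbl X − 𝐩 ⊗ I_N)⁻¹)_{ii}` the average of the diagonal `2×2` blocks of
the resolvent, `α = 𝐌 0 0` and `β = −i·(𝐌 0 1)`. -/
def qGreen {N : ℕ} (p : ℂ × ℂ) (X : Matrix (Fin N) (Fin N) ℂ) : ℂ × ℂ :=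
  let R : Matrix (Fin N × Fin 2) (Fin N × Fin 2) ℂ := (dbl X - qId p)⁻¹
  ((N : ℂ)⁻¹ * ∑ i : Fin N, R (i, 0) (i, 0),
   -Complex.I * ((N : ℂ)⁻¹ * ∑ i : Fin N, R (i, 0) (i, 1)))

/-- The normalised `N×N` random matrix `A_N` with entries `ξ i j / √N`. -/
def rmat {Ω : Type*} (ξ : ℕ → ℕ → Ω → ℂ) (N : ℕ) (ω : Ω) :
    Matrix (Fin N) (Fin N) ℂ :=
  Matrix.of fun i j : Fin N => ξ (i : ℕ) (j : ℕ) ω / ((Real.sqrt N : ℝ) : ℂ)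

/-- The entrywise expectation (Bochner integral) of a random matrix. -/
def Emat {Ω : Type*} [MeasurableSpace Ω] (μ : Measure Ω) {n m : Type*}
    (f : Ω → Matrix n m ℂ) : Matrix n m ℂ :=
  Matrix.of fun i j => ∫ ω, f ω i j ∂μ

/-- The entrywise expectation of a random quaternion. -/
def Equat {Ω : Type*} [MeasurableSpace Ω] (μ : Measure Ω) (f : Ω → ℂ × ℂ) : ℂ × ℂ :=
  (∫ ω, (f ω).1 ∂μ, ∫ ω, (f ω).2 ∂μ)

/-- The standard complex Gaussian measure on `ℂ`, with density `π⁻¹·exp(−|z|²)`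
with respect to Lebesgue measure. -/
def gaussianC : Measure ℂ :=
  MeasureTheory.volume.withDensity fun z =>
    ENNReal.ofReal (Real.exp (-‖z‖ ^ 2) / Real.pi)

/-- `A` and `B` are independent `N×N` random matrices whose entries are i.i.d. standard
complex Gaussian: the joint law of all the entries of `A` and `B` is the corresponding
product of standard complex Gaussian measures. -/
structure IsGaussianPair {Ω : Type*} [MeasurableSpace Ω] (μ : Measure Ω) {N : ℕ}
    (A B : Ω → Matrix (Fin N) (Fin N) ℂ) : Prop where
  measA : ∀ i j, Measurable fun ω => A ω i j
  measB : ∀ i j, Measurable fun ω => B ω i j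
  law : Measure.map (fun ω =>
      Sum.elim (fun ij : Fin N × Fin N => A ω ij.1 ij.2)
        (fun ij : Fin N × Fin N => B ω ij.1 ij.2)) μ
    = Measure.pi fun _ : (Fin N × Fin N) ⊕ (Fin N × Fin N) => gaussianC

/-- Assumptions A1–A4 of the paper on the infinite array `ξ`:
(A1) zero mean, (A2) unit variance, (A3) third absolute moments bounded by `Cξ`,
(A4) the pairs `(ξ i j, ξ j i)` over unordered pairs `{i,j}` are jointly independent,
and `E[ξ i j · ξ j i] = τ` for `i ≠ j`. -/
structure IsIIDArray {Ω : Type*} [MeasurableSpace Ω] (μ : Measure Ω)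
    (ξ : ℕ → ℕ → Ω → ℂ) (Cξ τ : ℝ) : Prop where
  meas : ∀ i j, Measurable (ξ i j)
  int1 : ∀ i j, Integrable (ξ i j) μ
  mean_zero : ∀ i j, ∫ ω, ξ i j ω ∂μ = 0
  int2 : ∀ i j, Integrable (fun ω => ‖ξ i j ω‖ ^ 2) μ
  var_one : ∀ i j, ∫ ω, ‖ξ i j ω‖ ^ 2 ∂μ = 1
  int3 : ∀ i j, Integrable (fun ω => ‖ξ i j ω‖ ^ 3) μ
  third_moment : ∀ i j, ∫ ω, ‖ξ i j ω‖ ^ 3 ∂μ ≤ Cξ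
  indep : iIndepFun
      (fun p : {p : ℕ × ℕ // p.1 ≤ p.2} => fun ω =>
        (ξ p.1.1 p.1.2 ω, ξ p.1.2 p.1.1 ω)) μ
  int_cov : ∀ i j, Integrable (fun ω => ξ i j ω * ξ j i ω) μ
  cov : ∀ i j, i ≠ j → ∫ ω, ξ i j ω * ξ j i ω ∂μ = (τ : ℂ)

end

/-! With `G = [[Yᴴ, -ε], [ε, Y]]` and `D = diag(S, T)`, the off-diagonal blocks of `G Gᴴ` cancel
because `ε` is real, so `G Gᴴ = diag(Yᴴ Y + ε², Y Yᴴ + ε²) = D²`; as `D` is Hermitian,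
`F̃ = D⁻¹ G` satisfies `F̃ F̃ᴴ = 1`. For the determinant, a Schur complement on the invertible
block `ε` gives `det G = det (Y Yᴴ + ε²) = (det T)²`, while `det (Yᴴ Y + ε²) = det (Y Yᴴ + ε²)`
(Sylvester) forces the positive numbers `det S` and `det T` to agree, so
`det F̃ = (det T)² / (det S · det T) = 1`. -/

namespace Matrix

variable {n : Type*} [Fintype n] [DecidableEq n]

theorem det_fromBlocks_zero_one_neg_one_zero {R : Type*} [CommRing R] :
    (fromBlocks 0 1 (-1) 0 : Matrix (n ⊕ n) (n ⊕ n) R).det = 1 := by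
  have shear : (fromBlocks 0 1 (-1) 0 : Matrix (n ⊕ n) (n ⊕ n) R) =
      fromBlocks 1 1 0 1 * fromBlocks 1 0 (-1) 1 * fromBlocks 1 1 0 1 := by
    simp [fromBlocks_multiply]
  simp [shear]

theorem det_fromBlocks_smul_one_smul_one {K : Type*} [Field K] {c : K} (hc : c ≠ 0)
    (B C : Matrix n n K) :
    (fromBlocks (c • 1) B C (c • 1)).det = (c ^ 2 • 1 - C * B).det := by
  let : Invertible (c • 1 : Matrix n n K) :=
    invertibleOfRightInverse _ (c⁻¹ • 1) (by simp [smul_smul, hc])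
  have hinv : ⅟(c • 1 : Matrix n n K) = c⁻¹ • 1 := invOf_eq_right_inv (by simp [smul_smul, hc])
  rw [det_fromBlocks₁₁, hinv, det_smul, det_one, mul_one, ← det_smul, smul_sub]
  congr 2
  · rw [smul_smul, sq]
  · simp [smul_smul, hc]

theorem det_fromBlocks_neg_smul_one_smul_one {K : Type*} [Field K] {c : K} (hc : c ≠ 0)
    (A D : Matrix n n K) :
    (fromBlocks A (-(c • 1)) (c • 1) D).det = (D * A + c ^ 2 • 1).det := by
  have hswap : fromBlocks A (-(c • 1)) (c • 1) D * fromBlocks 0 1 (-1) 0 =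
      fromBlocks (c • 1) A (-D) (c • 1) := by
    simp [fromBlocks_multiply]
  rw [← mul_one (det _), ← det_fromBlocks_zero_one_neg_one_zero (n := n), ← det_mul, hswap,
    det_fromBlocks_smul_one_smul_one hc, neg_mul, sub_neg_eq_add, add_comm]

theorem det_mul_add_smul_one_comm {R : Type*} [CommRing R] (X Z : Matrix n n R) (c : R) :
    (X * Z + c • 1).det = (Z * X + c • 1).det := by
  have h := congrArg (Polynomial.eval c) (charpoly_mul_comm (-X) Z)
  simpa [eval_charpoly, smul_one_eq_diagonal, add_comm] using h

theorem fromBlocks_mul_conjTranspose_self {R : Type*} [CommRing R] [StarRing R] {c : R}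
    (hc : star c = c) (Y : Matrix n n R) :
    fromBlocks Yᴴ (-(c • 1)) (c • 1) Y * (fromBlocks Yᴴ (-(c • 1)) (c • 1) Y)ᴴ =
      fromBlocks (Yᴴ * Y + c ^ 2 • 1) 0 0 (Y * Yᴴ + c ^ 2 • 1) := by
  simp [fromBlocks_conjTranspose, fromBlocks_multiply, hc, sq, smul_smul, add_comm]

theorem nonsing_inv_mul_mul_conjTranspose_eq_one {R : Type*} [CommRing R] [StarRing R]
    {D G : Matrix n n R} (hD : D.IsHermitian) (hDu : IsUnit D.det) (hG : G * Gᴴ = D * D) :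
    D⁻¹ * G * (D⁻¹ * G)ᴴ = 1 := by
  rw [conjTranspose_mul, conjTranspose_nonsing_inv, hD.eq]
  calc D⁻¹ * G * (Gᴴ * D⁻¹) = D⁻¹ * (G * Gᴴ) * D⁻¹ := by simp only [mul_assoc]
    _ = D⁻¹ * D * (D * D⁻¹) := by rw [hG]; simp only [mul_assoc]
    _ = 1 := by rw [nonsing_inv_mul _ hDu, mul_nonsing_inv _ hDu, one_mul]

theorem PosDef.det_eq_of_det_mul_self_eq {𝕜 : Type*} [RCLike 𝕜] {S T : Matrix n n 𝕜}
    (hS : S.PosDef) (hT : T.PosDef) (h : (S * S).det = (T * T).det) : S.det = T.det := by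
  rw [det_mul, det_mul, mul_self_eq_mul_self_iff] at h
  refine h.resolve_right fun hneg => ?_
  have := add_pos hS.det_pos hT.det_pos
  rw [hneg, neg_add_cancel] at this
  exact this.false

end Matrix

theorem mobius_matrix_special_unitary_general
    (N : ℕ) (ε : ℝ) (hε : 0 < ε)
    (Y S T : Matrix (Fin N) (Fin N) ℂ)
    (hS : S.PosDef) (hT : T.PosDef)
    (hS2 : S * S = Yᴴ * Y + ((ε : ℂ) ^ 2) • 1)
    (hT2 : T * T = Y * Yᴴ + ((ε : ℂ) ^ 2) • 1) :
    (Matrix.fromBlocks S⁻¹ 0 0 T⁻¹ *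
        Matrix.fromBlocks Yᴴ (-((ε : ℂ) • (1 : Matrix (Fin N) (Fin N) ℂ)))
          ((ε : ℂ) • 1) Y)ᴴ *
      (Matrix.fromBlocks S⁻¹ 0 0 T⁻¹ *
        Matrix.fromBlocks Yᴴ (-((ε : ℂ) • (1 : Matrix (Fin N) (Fin N) ℂ)))
          ((ε : ℂ) • 1) Y) = 1 ∧
    (Matrix.fromBlocks S⁻¹ 0 0 T⁻¹ *
        Matrix.fromBlocks Yᴴ (-((ε : ℂ) • (1 : Matrix (Fin N) (Fin N) ℂ)))
          ((ε : ℂ) • 1) Y) *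
      (Matrix.fromBlocks S⁻¹ 0 0 T⁻¹ *
        Matrix.fromBlocks Yᴴ (-((ε : ℂ) • (1 : Matrix (Fin N) (Fin N) ℂ)))
          ((ε : ℂ) • 1) Y)ᴴ = 1 ∧
    (Matrix.fromBlocks S⁻¹ 0 0 T⁻¹ *
        Matrix.fromBlocks Yᴴ (-((ε : ℂ) • (1 : Matrix (Fin N) (Fin N) ℂ)))
          ((ε : ℂ) • 1) Y).det = 1 := by
  have hSdet : S.det ≠ 0 := hS.det_pos.ne'
  have hTdet : T.det ≠ 0 := hT.det_pos.ne'
  have hDinv : (fromBlocks S 0 0 T)⁻¹ = fromBlocks S⁻¹ 0 0 T⁻¹ := by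
    rw [inv_fromBlocks_zero₂₁_of_isUnit_iff _ _ _ (iff_of_true hS.isUnit hT.isUnit)]
    simp
  have hDherm : (fromBlocks S 0 0 T).IsHermitian :=
    hS.isHermitian.fromBlocks conjTranspose_zero hT.isHermitian
  have hDdet : IsUnit (fromBlocks S 0 0 T).det := by
    rw [det_fromBlocks_zero₂₁]
    exact (mul_ne_zero hSdet hTdet).isUnit
  have hgram : fromBlocks Yᴴ (-((ε : ℂ) • 1)) ((ε : ℂ) • 1) Y *
      (fromBlocks Yᴴ (-((ε : ℂ) • 1)) ((ε : ℂ) • 1) Y)ᴴ =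
      fromBlocks S 0 0 T * fromBlocks S 0 0 T := by
    rw [fromBlocks_mul_conjTranspose_self (Complex.conj_ofReal ε), fromBlocks_multiply, hS2, hT2]
    simp
  have hunitary := nonsing_inv_mul_mul_conjTranspose_eq_one hDherm hDdet hgram
  rw [hDinv] at hunitary
  refine ⟨mul_eq_one_comm.mp hunitary, hunitary, ?_⟩
  have hST : S.det = T.det := hS.det_eq_of_det_mul_self_eq hT <| by
    rw [hS2, hT2, det_mul_add_smul_one_comm]
  rw [det_mul, det_fromBlocks_zero₂₁, det_nonsing_inv, det_nonsing_inv,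
    det_fromBlocks_neg_smul_one_smul_one (by exact_mod_cast hε.ne'), ← hT2, det_mul, hST,
    Ring.inverse_eq_inv']
  field_simp

/-- **The normalised matrix Möbius transformation matrix is in SU(2N).**
If `S` and `T` are the positive definite square roots of `Yᴴ·Y + ε²·I` and `Y·Yᴴ + ε²·I`
respectively, then `F̃ = diag(S⁻¹, T⁻¹)·[[Yᴴ, −ε], [ε, Y]]` is unitary with determinant 1. -/
theorem mobius_matrix_special_unitary
    (N : ℕ) (hN : 1 ≤ N) (ε : ℝ) (hε : 0 < ε)
    (Y S T : Matrix (Fin N) (Fin N) ℂ)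
    (hS : S.PosDef) (hT : T.PosDef)
    (hS2 : S * S = Yᴴ * Y + ((ε : ℂ) ^ 2) • 1)
    (hT2 : T * T = Y * Yᴴ + ((ε : ℂ) ^ 2) • 1) :
    (Matrix.fromBlocks S⁻¹ 0 0 T⁻¹ *
        Matrix.fromBlocks Yᴴ (-((ε : ℂ) • (1 : Matrix (Fin N) (Fin N) ℂ)))
          ((ε : ℂ) • 1) Y)ᴴ *
      (Matrix.fromBlocks S⁻¹ 0 0 T⁻¹ *
        Matrix.fromBlocks Yᴴ (-((ε : ℂ) • (1 : Matrix (Fin N) (Fin N) ℂ)))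
          ((ε : ℂ) • 1) Y) = 1 ∧
    (Matrix.fromBlocks S⁻¹ 0 0 T⁻¹ *
        Matrix.fromBlocks Yᴴ (-((ε : ℂ) • (1 : Matrix (Fin N) (Fin N) ℂ)))
          ((ε : ℂ) • 1) Y) *
      (Matrix.fromBlocks S⁻¹ 0 0 T⁻¹ *
        Matrix.fromBlocks Yᴴ (-((ε : ℂ) • (1 : Matrix (Fin N) (Fin N) ℂ)))
          ((ε : ℂ) • 1) Y)ᴴ = 1 ∧
    (Matrix.fromBlocks S⁻¹ 0 0 T⁻¹ *
        Matrix.fromBlocks Yᴴ (-((ε : ℂ) • (1 : Matrix (Fin N) (Fin N) ℂ)))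
          ((ε : ℂ) • 1) Y).det = 1 :=
  mobius_matrix_special_unitary_general N ε hε Y S T hS hT hS2 hT2
end

section
/- Let N ≥ 1 and let X be an arbitrary N×N complex matrix. Let p₁ = a₁ + b₁j and p₂ = a₂ + b₂j be quaternions with b₁ ≠ 0 and b₂ ≠ 0. Then the quaternionic Green's functions satisfy the Lipschitz estimate |𝒢(p₁; X) − 𝒢(p₂; X)| ≤ |p₁ − p₂| / (|b₁|·|b₂|), where |·| denotes the quaternion norm. -/
open MeasureTheory ProbabilityTheory Matrix Filter Topology
open scoped ComplexConjugate

/-!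
With `R(p) = (𝐗 − 𝐩)⁻¹`, the resolvent identity gives `R(p₁) − R(p₂) = R(p₁) (𝐩₁ − 𝐩₂) R(p₂)`.
Write `𝐗 − 𝐩 = 𝐘 − 𝐛` with `𝐘` the doubling of `X − a` and `𝐛 = (b j) ⊗ I_N`. Since `𝐛ᴴ = −𝐛` and
`𝐘ᴴ 𝐛 = 𝐛 𝐘`, the cross terms of `(𝐘 − 𝐛)ᴴ (𝐘 − 𝐛)` cancel and it equals `𝐘ᴴ 𝐘 + |b|²`; hence
`‖R(p)‖ ≤ 1 / |b|` in operator norm. As `𝐪 ⊗ I_N` is `|q|` times a unitary,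
`‖R(p₁) − R(p₂)‖ ≤ |p₁ − p₂| / (|b₁| |b₂|)`. Finally `𝒢(p₁) − 𝒢(p₂)` is the average over `i` of
quaternions built from two entries of one row of `R(p₁) − R(p₂)`, and each has norm at most the
operator norm.
-/

open scoped Matrix.Norms.L2Operator Kronecker

namespace Matrix

variable {𝕜 n : Type*} [RCLike 𝕜] [Fintype n] [DecidableEq n]

lemma norm_toEuclideanCLM_apply_sq_of_conjTranspose_mul_self_eq {M D : Matrix n n 𝕜} {c : ℝ}
    (h : Mᴴ * M = Dᴴ * D + (c : 𝕜) • 1) (x : EuclideanSpace 𝕜 n) :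
    ‖toEuclideanCLM (𝕜 := 𝕜) M x‖ ^ 2 = ‖toEuclideanCLM (𝕜 := 𝕜) D x‖ ^ 2 + c * ‖x‖ ^ 2 := by
  have hT := congrArg (toEuclideanCLM (𝕜 := 𝕜) (n := n)) h
  simp only [map_add, map_mul, map_smul, map_one, ← star_eq_conjTranspose, map_star] at hT
  rw [ContinuousLinearMap.apply_norm_sq_eq_inner_adjoint_right,
    ContinuousLinearMap.apply_norm_sq_eq_inner_adjoint_right, ← ContinuousLinearMap.star_eq_adjoint,
    ← ContinuousLinearMap.star_eq_adjoint, ← ContinuousLinearMap.mul_def,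
    ← ContinuousLinearMap.mul_def, hT]
  simp only [_root_.add_apply, _root_.smul_apply, one_apply_eq_self, inner_add_right, map_add,
    inner_smul_real_right, RCLike.smul_re, inner_self_eq_norm_sq]

lemma norm_le_of_conjTranspose_mul_self_eq {M : Matrix n n 𝕜} {c : ℝ} (hc : 0 ≤ c)
    (h : Mᴴ * M = ((c ^ 2 : ℝ) : 𝕜) • 1) : ‖M‖ ≤ c := by
  refine ContinuousLinearMap.opNorm_le_bound (toEuclideanCLM (𝕜 := 𝕜) M) hc fun x => ?_
  have hx := norm_toEuclideanCLM_apply_sq_of_conjTranspose_mul_self_eq (M := M) (D := 0)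
    (c := c ^ 2) (by simpa using h) x
  rw [map_zero, _root_.zero_apply, norm_zero, ← mul_pow] at hx
  exact (pow_left_inj₀ (norm_nonneg _) (by positivity) two_ne_zero).1 (by simpa using hx) |>.le

lemma isUnit_and_norm_inv_le_of_conjTranspose_mul_self_eq {M D : Matrix n n 𝕜} {c : ℝ}
    (hc : 0 < c) (h : Mᴴ * M = Dᴴ * D + ((c ^ 2 : ℝ) : 𝕜) • 1) :
    IsUnit M ∧ ‖M⁻¹‖ ≤ c⁻¹ := by
  have hlow (x : EuclideanSpace 𝕜 n) : c * ‖x‖ ≤ ‖toEuclideanCLM (𝕜 := 𝕜) M x‖ := by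
    have hx := norm_toEuclideanCLM_apply_sq_of_conjTranspose_mul_self_eq h x
    refine (pow_le_pow_iff_left₀ (by positivity) (norm_nonneg _) two_ne_zero).1 ?_
    nlinarith [sq_nonneg ‖toEuclideanCLM (𝕜 := 𝕜) D x‖]
  have hM : IsUnit M := by
    rw [isUnit_iff_isUnit_det, isUnit_iff_ne_zero, Ne, ← exists_mulVec_eq_zero_iff]
    rintro ⟨v, hv, hMv⟩
    have := hlow (WithLp.toLp 2 v)
    simp only [toEuclideanCLM_toLp, hMv, WithLp.toLp_zero, norm_zero] at this
    exact hv (by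
      simpa [hc.ne'] using le_antisymm (nonpos_of_mul_nonpos_right this hc) (norm_nonneg _))
  refine ⟨hM, ContinuousLinearMap.opNorm_le_bound _ (by positivity) fun y => ?_⟩
  show ‖toEuclideanCLM (𝕜 := 𝕜) M⁻¹ y‖ ≤ c⁻¹ * ‖y‖
  have hy := hlow (toEuclideanCLM (𝕜 := 𝕜) M⁻¹ y)
  rw [← mul_apply_eq_comp, ← map_mul, mul_nonsing_inv _ ((isUnit_iff_isUnit_det M).1 hM), map_one,
    one_apply_eq_self] at hy
  rwa [le_inv_mul_iff₀ hc]

lemma norm_apply_sq_add_norm_apply_sq_le (T : Matrix n n 𝕜) (r : n) {s s' : n} (hs : s ≠ s') :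
    ‖T r s‖ ^ 2 + ‖T r s'‖ ^ 2 ≤ ‖T‖ ^ 2 := by
  set x := toEuclideanCLM (𝕜 := 𝕜) Tᴴ (EuclideanSpace.single r 1)
  have hx : ‖x‖ ≤ ‖T‖ := by
    have := (toEuclideanCLM (𝕜 := 𝕜) Tᴴ).le_opNorm (EuclideanSpace.single r 1)
    rwa [l2_opNorm_toEuclideanCLM, l2_opNorm_conjTranspose, PiLp.norm_single, norm_one,
      mul_one] at this
  calc ‖T r s‖ ^ 2 + ‖T r s'‖ ^ 2 = ∑ i ∈ {s, s'}, ‖x i‖ ^ 2 := by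
        simp [Finset.sum_pair hs, x]
    _ ≤ ∑ i, ‖x i‖ ^ 2 := Finset.sum_le_sum_of_subset_of_nonneg (Finset.subset_univ _) (by simp)
    _ = ‖x‖ ^ 2 := (EuclideanSpace.norm_sq_eq x).symm
    _ ≤ ‖T‖ ^ 2 := by gcongr

end Matrix

lemma norm_inv_card_smul_sum_le {𝕜 E : Type*} [RCLike 𝕜] [SeminormedAddCommGroup E]
    [NormedSpace 𝕜 E] {N : ℕ} (v : Fin N → E) {B : ℝ} (hB : 0 ≤ B) (hv : ∀ i, ‖v i‖ ≤ B) :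
    ‖(N : 𝕜)⁻¹ • ∑ i, v i‖ ≤ B := by
  rw [norm_smul, norm_inv, RCLike.norm_natCast]
  calc (N : ℝ)⁻¹ * ‖∑ i, v i‖ ≤ (N : ℝ)⁻¹ * (N * B) := by
        gcongr
        simpa using norm_sum_le_of_le Finset.univ fun i _ => hv i
    _ ≤ B := by
        rw [← mul_assoc]
        exact mul_le_of_le_one_left hB (inv_mul_le_one_of_le₀ le_rfl (Nat.cast_nonneg N))

section Quaternion

open Complex

lemma qnorm_eq_norm_toLp (p : ℂ × ℂ) : qnorm p = ‖WithLp.toLp 2 p‖ := by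
  rw [WithLp.prod_norm_eq_of_L2]; rfl

lemma qmat_sub (p q : ℂ × ℂ) : qmat p - qmat q = qmat (p - q) := by
  ext s t; fin_cases s <;> fin_cases t <;> simp [qmat, mul_sub]

lemma conjTranspose_qmat (p : ℂ × ℂ) : (qmat p)ᴴ = qmat (conj p.1, -p.2) := by
  ext s t; fin_cases s <;> fin_cases t <;> simp [qmat]

lemma conjTranspose_qmat_mul_self (p : ℂ × ℂ) :
    (qmat p)ᴴ * qmat p = ((qnorm p ^ 2 : ℝ) : ℂ) • 1 := by
  rw [qnorm, Real.sq_sqrt (by positivity)]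
  ext s t; fin_cases s <;> fin_cases t <;> simp [qmat, Matrix.mul_apply, Fin.sum_univ_two]
  · linear_combination conj_mul' p.1 + mul_conj' p.2 - p.2 * conj p.2 * I_sq
  · ring
  · ring
  · linear_combination mul_conj' p.1 + conj_mul' p.2 - conj p.2 * p.2 * I_sq

variable {N : ℕ}

lemma qId_eq_one_kronecker (p : ℂ × ℂ) :
    qId (N := N) p = (1 : Matrix (Fin N) (Fin N) ℂ) ⊗ₖ qmat p := by
  ext ⟨i, s⟩ ⟨j, t⟩
  by_cases hij : i = j <;> simp [qId, hij]

lemma qId_sub (p q : ℂ × ℂ) : qId (N := N) p - qId q = qId (p - q) := by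
  ext ⟨i, s⟩ ⟨j, t⟩
  by_cases hij : i = j <;> simp [qId, hij, ← qmat_sub]

lemma conjTranspose_qId (p : ℂ × ℂ) : (qId (N := N) p)ᴴ = qId (conj p.1, -p.2) := by
  rw [qId_eq_one_kronecker, Matrix.conjTranspose_kronecker, Matrix.conjTranspose_one,
    conjTranspose_qmat, qId_eq_one_kronecker]

lemma conjTranspose_qId_mul_self (p : ℂ × ℂ) :
    (qId (N := N) p)ᴴ * qId p = ((qnorm p ^ 2 : ℝ) : ℂ) • 1 := by
  rw [qId_eq_one_kronecker, Matrix.conjTranspose_kronecker, ← Matrix.mul_kronecker_mul,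
    conjTranspose_qmat_mul_self, Matrix.conjTranspose_one, Matrix.one_mul, Matrix.kronecker_smul,
    Matrix.one_kronecker_one]

lemma norm_qId_le (p : ℂ × ℂ) : ‖qId (N := N) p‖ ≤ qnorm p :=
  Matrix.norm_le_of_conjTranspose_mul_self_eq (Real.sqrt_nonneg _) (conjTranspose_qId_mul_self p)

lemma conjTranspose_qId_mk_zero (b : ℂ) : (qId (N := N) (0, b))ᴴ = -qId (0, b) := by
  rw [conjTranspose_qId]
  ext ⟨i, s⟩ ⟨j, t⟩
  by_cases hij : i = j <;> fin_cases s <;> fin_cases t <;> simp [qId, qmat, hij]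

lemma conjTranspose_dbl (Y : Matrix (Fin N) (Fin N) ℂ) : (dbl Y)ᴴ = dbl Yᴴ := by
  ext ⟨i, s⟩ ⟨j, t⟩
  fin_cases s <;> fin_cases t <;> simp [dbl]

lemma dbl_conjTranspose_mul_qId (Y : Matrix (Fin N) (Fin N) ℂ) (b : ℂ) :
    dbl Yᴴ * qId (0, b) = qId (0, b) * dbl Y := by
  ext ⟨i, s⟩ ⟨j, t⟩
  simp only [Matrix.mul_apply, Fintype.sum_prod_type, Fin.sum_univ_two, dbl, qId, qmat,
    Matrix.of_apply, Matrix.conjTranspose_apply]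
  fin_cases s <;> fin_cases t <;> simp [Finset.sum_ite_eq, eq_comm] <;> ring

lemma dbl_sub_qId (X : Matrix (Fin N) (Fin N) ℂ) (p : ℂ × ℂ) :
    dbl X - qId p = dbl (X - p.1 • 1) - qId (0, p.2) := by
  ext ⟨i, s⟩ ⟨j, t⟩
  by_cases hij : i = j
  · subst hij
    fin_cases s <;> fin_cases t <;> simp [dbl, qId, qmat]
  · fin_cases s <;> fin_cases t <;> simp [dbl, qId, qmat, hij, Ne.symm hij]

lemma conjTranspose_mul_self_dbl_sub_qId (Y : Matrix (Fin N) (Fin N) ℂ) (b : ℂ) :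
    (dbl Y - qId (0, b))ᴴ * (dbl Y - qId (0, b))
      = (dbl Y)ᴴ * dbl Y + ((‖b‖ ^ 2 : ℝ) : ℂ) • 1 := by
  have hJJ : (qId (N := N) (0, b))ᴴ * qId (0, b) = ((‖b‖ ^ 2 : ℝ) : ℂ) • 1 := by
    simpa [qnorm] using conjTranspose_qId_mul_self (N := N) (0, b)
  have hcross : (dbl Y)ᴴ * qId (0, b) + (qId (N := N) (0, b))ᴴ * dbl Y = 0 := by
    rw [conjTranspose_dbl, dbl_conjTranspose_mul_qId, conjTranspose_qId_mk_zero, Matrix.neg_mul,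
      add_neg_cancel]
  calc _ = (dbl Y)ᴴ * dbl Y + (qId (0, b))ᴴ * qId (0, b)
        - ((dbl Y)ᴴ * qId (0, b) + (qId (N := N) (0, b))ᴴ * dbl Y) := by
        rw [Matrix.conjTranspose_sub]; noncomm_ring
    _ = _ := by rw [hcross, sub_zero, hJJ]

lemma isUnit_and_norm_inv_dbl_sub_qId_le (X : Matrix (Fin N) (Fin N) ℂ) {p : ℂ × ℂ}
    (hp : p.2 ≠ 0) : IsUnit (dbl X - qId p) ∧ ‖(dbl X - qId p)⁻¹‖ ≤ ‖p.2‖⁻¹ := by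
  rw [dbl_sub_qId]
  exact Matrix.isUnit_and_norm_inv_le_of_conjTranspose_mul_self_eq (norm_pos_iff.2 hp)
    (conjTranspose_mul_self_dbl_sub_qId _ _)

def diagBlockQuat (M : Matrix (Fin N × Fin 2) (Fin N × Fin 2) ℂ) (i : Fin N) : ℂ × ℂ :=
  (M (i, 0) (i, 0), -I * M (i, 0) (i, 1))

lemma qnorm_diagBlockQuat_le (M : Matrix (Fin N × Fin 2) (Fin N × Fin 2) ℂ) (i : Fin N) :
    qnorm (diagBlockQuat M i) ≤ ‖M‖ := by
  rw [qnorm, Real.sqrt_le_iff]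
  refine ⟨norm_nonneg _, ?_⟩
  simpa [diagBlockQuat] using
    M.norm_apply_sq_add_norm_apply_sq_le (i, 0) (s := (i, 0)) (s' := (i, 1)) (by simp)

lemma qGreen_sub_qGreen (p₁ p₂ : ℂ × ℂ) (X : Matrix (Fin N) (Fin N) ℂ) :
    qGreen p₁ X - qGreen p₂ X
      = (N : ℂ)⁻¹ • ∑ i, diagBlockQuat ((dbl X - qId p₁)⁻¹ - (dbl X - qId p₂)⁻¹) i := by
  ext <;> simp only [qGreen, diagBlockQuat, Prod.fst_sub, Prod.snd_sub, Prod.smul_fst,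
    Prod.smul_snd, Prod.fst_sum, Prod.snd_sum, Matrix.sub_apply, smul_eq_mul, Finset.mul_sum,
    ← Finset.sum_sub_distrib] <;>
    exact Finset.sum_congr rfl fun i _ => by ring

end Quaternion

theorem qgreen_lipschitz_general
    (N : ℕ) (X : Matrix (Fin N) (Fin N) ℂ)
    (p₁ p₂ : ℂ × ℂ) (h₁ : p₁.2 ≠ 0) (h₂ : p₂.2 ≠ 0) :
    qnorm (qGreen p₁ X - qGreen p₂ X)
      ≤ qnorm (p₁ - p₂) / (‖p₁.2‖ * ‖p₂.2‖) := by
  obtain ⟨hu₁, hR₁⟩ := isUnit_and_norm_inv_dbl_sub_qId_le X h₁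
  obtain ⟨hu₂, hR₂⟩ := isUnit_and_norm_inv_dbl_sub_qId_le X h₂
  have hT : ‖(dbl X - qId p₁)⁻¹ - (dbl X - qId p₂)⁻¹‖
      ≤ qnorm (p₁ - p₂) / (‖p₁.2‖ * ‖p₂.2‖) := by
    rw [Matrix.inv_sub_inv (iff_of_true hu₁ hu₂), sub_sub_sub_cancel_left, qId_sub]
    calc _ ≤ ‖(dbl X - qId p₁)⁻¹‖ * ‖qId (N := N) (p₁ - p₂)‖ * ‖(dbl X - qId p₂)⁻¹‖ :=
          (Matrix.l2_opNorm_mul _ _).trans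
            (mul_le_mul_of_nonneg_right (Matrix.l2_opNorm_mul _ _) (norm_nonneg _))
      _ ≤ ‖p₁.2‖⁻¹ * qnorm (p₁ - p₂) * ‖p₂.2‖⁻¹ := by
          gcongr
          · exact mul_nonneg (inv_nonneg.2 (norm_nonneg _)) (Real.sqrt_nonneg _)
          · exact norm_qId_le _
      _ = _ := by field_simp
  rw [qGreen_sub_qGreen, qnorm_eq_norm_toLp, WithLp.toLp_smul, WithLp.toLp_sum]
  exact norm_inv_card_smul_sum_le _ ((norm_nonneg _).trans hT)
    fun i => by rw [← qnorm_eq_norm_toLp]; exact (qnorm_diagBlockQuat_le _ i).trans hT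

/-- **Lipschitz estimate for the quaternionic Green's function:**
`|𝒢(p₁; X) − 𝒢(p₂; X)| ≤ |p₁ − p₂| / (|b₁|·|b₂|)` for quaternions `pₖ = aₖ + bₖj`
with nonzero hypercomplex parts. -/
theorem qgreen_lipschitz
    (N : ℕ) (hN : 1 ≤ N) (X : Matrix (Fin N) (Fin N) ℂ)
    (p₁ p₂ : ℂ × ℂ) (h₁ : p₁.2 ≠ 0) (h₂ : p₂.2 ≠ 0) :
    qnorm (qGreen p₁ X - qGreen p₂ X)
      ≤ qnorm (p₁ - p₂) / (‖p₁.2‖ * ‖p₂.2‖) :=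
  qgreen_lipschitz_general N X p₁ p₂ h₁ h₂
end
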